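/- Let (ℱ_l)_{l∈ℕ} be a filtration, Y a random variable with values in a finite set M, and define R_l = E[ min_{y∈M} P(Y ≠ y | ℱ_l) ] and R_∞ = E[ min_{y∈M} P(Y ≠ y | ℱ_∞) ] where ℱ_∞ = σ(⋃_l ℱ_l). Then (R_l) is nonincreasing and R_l → R_∞ as l → ∞. -/

import Mathlib

/-!
Write `p_y^m = P(Y = y | m)`. The integrand `min_y (1 - p_y^m)` is an infimum of functions that
are affine in `p^m`, hence concave: by conditional Jensen (here just monotonicity of the
conditional expectation applied to each member of the infimum) and the tower property,
`E[min_y (1 - p_y^{m'}) | m] ≤ min_y (1 - p_y^m)` for `m ≤ m'`, and integrating gives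
monotonicity. Lévy's upward theorem gives `p_y^{ℱ_l} → p_y^{ℱ_∞}` almost surely, and since the
integrands are bounded, dominated convergence gives `R_l → R_∞`.
-/

open MeasureTheory Filter Topology

theorem Finset.abs_inf'_le {ι α : Type*} [AddCommGroup α] [LinearOrder α] [IsOrderedAddMonoid α]
    {s : Finset ι} (hs : s.Nonempty) {g : ι → α} {C : α} (h : ∀ i ∈ s, |g i| ≤ C) :
    |s.inf' hs g| ≤ C := by
  obtain ⟨i, hi, heq⟩ := s.exists_mem_eq_inf' hs g
  exact heq ▸ h i hi

section FinsetInf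

variable {ι Ω : Type*} {m m0 : MeasurableSpace Ω} {μ : Measure Ω} {s : Finset ι} {g : ι → Ω → ℝ}

theorem MeasureTheory.integrable_finset_inf' (hs : s.Nonempty) (hg : ∀ i ∈ s, Integrable (g i) μ) :
    Integrable (fun ω => s.inf' hs fun i => g i ω) μ := by
  simp_rw [← Finset.inf'_apply]
  exact Finset.inf'_induction hs g (p := (Integrable · μ)) (fun _ h₁ _ h₂ => h₁.inf h₂) hg

theorem MeasureTheory.condExp_finset_inf'_ae_le (hs : s.Nonempty)
    (hg : ∀ i ∈ s, Integrable (g i) μ) :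
    μ[fun ω => s.inf' hs fun i => g i ω | m] ≤ᵐ[μ] fun ω => s.inf' hs fun i => μ[g i | m] ω := by
  have hle : ∀ i ∈ s, μ[fun ω => s.inf' hs fun i => g i ω | m] ≤ᵐ[μ] μ[g i | m] := fun i hi =>
    condExp_mono (integrable_finset_inf' hs hg) (hg i hi)
      (Eventually.of_forall fun ω => Finset.inf'_le _ hi)
  filter_upwards [(eventually_all_finset s).2 hle] with ω hω
  exact Finset.le_inf' _ _ hω

end FinsetInf

section CondRisk

variable {Ω M : Type*} [Fintype M] [Nonempty M] {m m' m0 : MeasurableSpace Ω} {μ : Measure Ω}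
  {f : M → Ω → ℝ}

/-- For `f y = 𝟙{Y = y}` this is `min_y P(Y ≠ y | m)`. -/
noncomputable def condRisk (μ : Measure Ω) (m : MeasurableSpace Ω) (f : M → Ω → ℝ) : Ω → ℝ :=
  fun ω => Finset.univ.inf' Finset.univ_nonempty fun y => 1 - μ[f y | m] ω

theorem ae_abs_condRisk_le {C : ℝ} (hf : ∀ y, ∀ᵐ ω ∂μ, |f y ω| ≤ C) :
    ∀ᵐ ω ∂μ, |condRisk μ m f ω| ≤ 1 + C := by
  filter_upwards [ae_all_iff.2 fun y => ae_bdd_abs_condExp_of_ae_bdd_abs (m := m) (hf y)]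
    with ω hω
  refine Finset.abs_inf'_le _ fun y _ => (abs_sub _ _).trans ?_
  simpa using hω y

variable [IsFiniteMeasure μ]

theorem integrable_condRisk : Integrable (condRisk μ m f) μ :=
  integrable_finset_inf' _ fun _ _ => (integrable_const 1).sub integrable_condExp

theorem condExp_const_sub_condExp_of_le (c : ℝ) {g : Ω → ℝ} (hm : m ≤ m')
    (hm' : m' ≤ m0) :
    μ[fun ω => c - μ[g | m'] ω | m] =ᵐ[μ] fun ω => c - μ[g | m] ω := by
  filter_upwards [condExp_sub (m := m) (integrable_const c) (integrable_condExp (m := m') (f := g)),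
    condExp_condExp_of_le (μ := μ) (f := g) hm hm'] with ω hsub htower
  rw [show (fun ω => c - μ[g | m'] ω) = (fun _ => c) - μ[g | m'] from rfl, hsub, Pi.sub_apply,
    condExp_const (hm.trans hm'), htower]

theorem condExp_condRisk_ae_le (hm : m ≤ m') (hm' : m' ≤ m0) :
    μ[condRisk μ m' f | m] ≤ᵐ[μ] condRisk μ m f := by
  filter_upwards [condExp_finset_inf'_ae_le Finset.univ_nonempty (m := m)
      (g := fun y ω => 1 - μ[f y | m'] ω)
      fun y _ => (integrable_const 1).sub integrable_condExp,
    ae_all_iff.2 fun y => condExp_const_sub_condExp_of_le 1 (g := f y) hm hm'] with ω hinf htower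
  unfold condRisk
  simpa only [htower] using hinf

theorem integral_condRisk_le_of_le (hm : m ≤ m') (hm' : m' ≤ m0) :
    ∫ ω, condRisk μ m' f ω ∂μ ≤ ∫ ω, condRisk μ m f ω ∂μ :=
  calc ∫ ω, condRisk μ m' f ω ∂μ = ∫ ω, μ[condRisk μ m' f | m] ω ∂μ :=
        (integral_condExp (hm.trans hm')).symm
    _ ≤ ∫ ω, condRisk μ m f ω ∂μ :=
        integral_mono_ae integrable_condExp integrable_condRisk (condExp_condRisk_ae_le hm hm')

theorem antitone_integral_condRisk (ℱ : Filtration ℕ m0) :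
    Antitone fun l => ∫ ω, condRisk μ (ℱ l) f ω ∂μ :=
  fun _ _ hl => integral_condRisk_le_of_le (ℱ.mono hl) (ℱ.le _)

theorem tendsto_integral_condRisk (ℱ : Filtration ℕ m0) {C : ℝ}
    (hf : ∀ y, ∀ᵐ ω ∂μ, |f y ω| ≤ C) :
    Tendsto (fun l => ∫ ω, condRisk μ (ℱ l) f ω ∂μ) atTop
      (𝓝 (∫ ω, condRisk μ (⨆ l, ℱ l) f ω ∂μ)) := by
  refine tendsto_integral_of_dominated_convergence (fun _ => 1 + C)
    (fun _ => integrable_condRisk.aestronglyMeasurable) (integrable_const _)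
    (fun _ => by simpa only [Real.norm_eq_abs] using ae_abs_condRisk_le hf) ?_
  filter_upwards [ae_all_iff.2 fun y => tendsto_ae_condExp (μ := μ) (ℱ := ℱ) (f y)] with ω hω
  exact Tendsto.finset_inf'_nhds_apply _ fun y _ => (hω y).const_sub 1

end CondRisk

open scoped Classical in
theorem stmt_10_general (Ω M : Type*) [m0 : MeasurableSpace Ω]
    [Fintype M] [Nonempty M]
    (μ : Measure Ω) [IsProbabilityMeasure μ]
    (ℱ : Filtration ℕ m0) (Y : Ω → M)
    (R : ℕ → ℝ) (Rinf : ℝ)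
    (hR : ∀ l, R l = ∫ ω, Finset.univ.inf' Finset.univ_nonempty
      (fun y => 1 - (μ[(fun ω' => if Y ω' = y then (1 : ℝ) else 0) | ℱ l]) ω) ∂μ)
    (hRinf : Rinf = ∫ ω, Finset.univ.inf' Finset.univ_nonempty
      (fun y => 1 - (μ[(fun ω' => if Y ω' = y then (1 : ℝ) else 0) | ⨆ l, ℱ l]) ω) ∂μ) :
    Antitone R ∧ Tendsto R atTop (nhds Rinf) := by
  set f : M → Ω → ℝ := fun y ω => if Y ω = y then 1 else 0
  have hf : ∀ y, ∀ᵐ ω ∂μ, |f y ω| ≤ 1 := fun y =>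
    Eventually.of_forall fun ω => by by_cases h : Y ω = y <;> simp [f, h]
  obtain rfl : R = fun l => ∫ ω, condRisk μ (ℱ l) f ω ∂μ := funext hR
  obtain rfl : Rinf = ∫ ω, condRisk μ (⨆ l, ℱ l) f ω ∂μ := hRinf
  exact ⟨antitone_integral_condRisk ℱ, tendsto_integral_condRisk ℱ hf⟩

open scoped Classical in
theorem stmt_10 (Ω M : Type*) [m0 : MeasurableSpace Ω]
    [MeasurableSpace M] [MeasurableSingletonClass M] [Fintype M] [Nonempty M]
    (μ : Measure Ω) [IsProbabilityMeasure μ]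
    (ℱ : Filtration ℕ m0) (Y : Ω → M) (hY : Measurable Y)
    (R : ℕ → ℝ) (Rinf : ℝ)
    (hR : ∀ l, R l = ∫ ω, Finset.univ.inf' Finset.univ_nonempty
      (fun y => 1 - (μ[(fun ω' => if Y ω' = y then (1 : ℝ) else 0) | ℱ l]) ω) ∂μ)
    (hRinf : Rinf = ∫ ω, Finset.univ.inf' Finset.univ_nonempty
      (fun y => 1 - (μ[(fun ω' => if Y ω' = y then (1 : ℝ) else 0) | ⨆ l, ℱ l]) ω) ∂μ) :
    Antitone R ∧ Tendsto R atTop (nhds Rinf) :=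
  stmt_10_general Ω M (m0 := m0) μ ℱ Y R Rinf hR hRinf
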